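/- A point x ∈ 𝔹 is a stationary point of θ, i.e. F′(x)* F(x) = 0, if and only if F(x) = 0, i.e. if and only if x is a Z-eigenvector of A corresponding to the eigenvalue A x^m. -/

import Mathlib

/-!
Testing `F′(x)* F(x)` against `x` itself suffices. By Euler's identity for the homogeneous
map `F`, `F′(x) x = (m - 1) F(x) - 2 (A x^m) x`, and on the unit sphere `F(x) ⟂ x`, so
`⟪F′(x)* F(x), x⟫ = ⟪F(x), F′(x) x⟫ = (m - 1) ‖F(x)‖²`, which vanishes only if `F(x) = 0`.
-/

open scoped RealInnerProductSpace

noncomputable section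

/-- Euclidean space `ℝ^n`. -/
abbrev Euc (n : ℕ) : Type := EuclideanSpace ℝ (Fin n)

/-- An `m`-th order tensor on `ℝ^n`, viewed as a continuous `m`-multilinear form. -/
abbrev Tensor (m n : ℕ) : Type := ContinuousMultilinearMap ℝ (fun _ : Fin m => Euc n) ℝ

/-- A tensor is symmetric if it is invariant under every permutation of its arguments. -/
def IsSymmTensor {m n : ℕ} (A : Tensor m n) : Prop :=
  ∀ (e : Equiv.Perm (Fin m)) (v : Fin m → Euc n), A (v ∘ e) = A v

/-- `A x^m`, the homogeneous form `A (x, …, x)`. -/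
def tpow {m n : ℕ} (A : Tensor m n) (x : Euc n) : ℝ := A (fun _ => x)

/-- The last index of `Fin m`. -/
def lastIdx {m : ℕ} (_hm : 2 ≤ m) : Fin m := ⟨m - 1, by omega⟩

/-- The second to last index of `Fin m`. -/
def sndIdx {m : ℕ} (_hm : 2 ≤ m) : Fin m := ⟨m - 2, by omega⟩

lemma sndIdx_ne_lastIdx {m : ℕ} (hm : 2 ≤ m) : sndIdx hm ≠ lastIdx hm := by
  simp only [sndIdx, lastIdx, Fin.mk.injEq, ne_eq]
  omega

/-- `A x^{m-1}`: the unique vector with `⟪A x^{m-1}, v⟫ = A (x, …, x, v)` for all `v`. -/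
def tvec {m n : ℕ} (A : Tensor m n) (hm : 2 ≤ m) (x : Euc n) : Euc n :=
  (InnerProductSpace.toDual ℝ (Euc n)).symm
    (A.toContinuousLinearMap (fun _ => x) (lastIdx hm))

/-- `F(x) = A x^{m-1} - (A x^m) • x`. -/
def Fvec {m n : ℕ} (A : Tensor m n) (hm : 2 ≤ m) (x : Euc n) : Euc n :=
  tvec A hm x - tpow A x • x

/-- `φ(x) = (1/m) A x^m`. -/
def phi {m n : ℕ} (A : Tensor m n) (x : Euc n) : ℝ := (1 / (m : ℝ)) * tpow A x

/-- Orthogonal projection `P_x d = d - ⟪x, d⟫ x` (for `x` a unit vector). -/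
def Pproj {n : ℕ} (x d : Euc n) : Euc n := d - ⟪x, d⟫ • x

/-- `x(α) = (x + α d)/‖x + α d‖`, the projection of `x + α d` onto the unit sphere. -/
def xcur {n : ℕ} (x d : Euc n) (α : ℝ) : Euc n := ‖x + α • d‖⁻¹ • (x + α • d)

/-- `w(x, d)`: the unique vector with `⟪w(x, d), v⟫ = A (x, …, x, d, v)` for all `v`. -/
def wvec {m n : ℕ} (A : Tensor m n) (hm : 2 ≤ m) (x d : Euc n) : Euc n :=
  (InnerProductSpace.toDual ℝ (Euc n)).symm
    (A.toContinuousLinearMap (Function.update (fun _ => x) (sndIdx hm) d) (lastIdx hm))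

/-- `A (x, …, x, d, d)`. -/
def A2 {m n : ℕ} (A : Tensor m n) (hm : 2 ≤ m) (x d : Euc n) : ℝ :=
  A (Function.update (Function.update (fun _ => x) (sndIdx hm) d) (lastIdx hm) d)

lemma wvec_add {m n : ℕ} (A : Tensor m n) (hm : 2 ≤ m) (x d₁ d₂ : Euc n) :
    wvec A hm x (d₁ + d₂) = wvec A hm x d₁ + wvec A hm x d₂ := by
  unfold wvec
  rw [← map_add]
  congr 1
  ext v
  simp only [ContinuousMultilinearMap.toContinuousLinearMap_apply, ContinuousLinearMap.add_apply]
  rw [Function.update_comm (sndIdx_ne_lastIdx hm), Function.update_comm (sndIdx_ne_lastIdx hm),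
    Function.update_comm (sndIdx_ne_lastIdx hm)]
  exact A.map_update_add _ _ _ _

lemma wvec_smul {m n : ℕ} (A : Tensor m n) (hm : 2 ≤ m) (x : Euc n) (c : ℝ) (d : Euc n) :
    wvec A hm x (c • d) = c • wvec A hm x d := by
  unfold wvec
  rw [← map_smul]
  congr 1
  ext v
  simp only [ContinuousMultilinearMap.toContinuousLinearMap_apply,
    ContinuousLinearMap.smul_apply, smul_eq_mul]
  rw [Function.update_comm (sndIdx_ne_lastIdx hm), Function.update_comm (sndIdx_ne_lastIdx hm)]
  exact A.map_update_smul _ _ _ _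

/-- The Jacobian `F'(x) d = (m-1) w(x,d) - (A x^m) d - m ⟪A x^{m-1}, d⟫ x`. -/
def FderivL {m n : ℕ} (A : Tensor m n) (hm : 2 ≤ m) (x : Euc n) : Euc n →L[ℝ] Euc n :=
  LinearMap.toContinuousLinearMap
  { toFun := fun d =>
      ((m : ℝ) - 1) • wvec A hm x d - tpow A x • d - ((m : ℝ) * ⟪tvec A hm x, d⟫) • x
    map_add' := by
      intro d₁ d₂
      try simp only
      rw [wvec_add, inner_add_right]
      module
    map_smul' := by
      intro c d
      simp only [RingHom.id_apply]
      rw [wvec_smul, inner_smul_right]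
      module }

/-- A Newton direction at `x`: `⟪x, d⟫ = 0` and `P_x (F'(x) d + F(x)) = 0`. -/
def NewtonDir {m n : ℕ} (A : Tensor m n) (hm : 2 ≤ m) (x d : Euc n) : Prop :=
  ⟪x, d⟫ = 0 ∧ Pproj x (FderivL A hm x d + Fvec A hm x) = 0

/-- The residual function `θ(x) = (1/2)‖F(x)‖²`. -/
def theta {m n : ℕ} (A : Tensor m n) (hm : 2 ≤ m) (x : Euc n) : ℝ :=
  (1 / 2) * ‖Fvec A hm x‖ ^ 2

/-- Assumption (A): second-order sufficient condition at the KKT point `x̄`. -/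
def AssumpA {m n : ℕ} (A : Tensor m n) (hm : 2 ≤ m) (xb : Euc n) (lam : ℝ) : Prop :=
  ‖xb‖ = 1 ∧ tvec A hm xb = lam • xb ∧ lam = tpow A xb ∧
    ∀ d : Euc n, d ≠ 0 → ⟪xb, d⟫ = 0 →
      0 < ((m : ℝ) - 1) * A2 A hm xb d - lam * ‖d‖ ^ 2

end

section

variable {m n : ℕ} (A : Tensor m n) (hm : 2 ≤ m)

lemma inner_tvec (x v : Euc n) :
    ⟪tvec A hm x, v⟫ = A (Function.update (fun _ => x) (lastIdx hm) v) := by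
  rw [tvec, InnerProductSpace.toDual_symm_apply]
  rfl

lemma inner_tvec_self (x : Euc n) : ⟪tvec A hm x, x⟫ = tpow A x := by
  rw [inner_tvec, Function.update_eq_self]
  rfl

lemma wvec_self (x : Euc n) : wvec A hm x x = tvec A hm x := by
  rw [wvec, tvec, Function.update_eq_self]

lemma FderivL_apply (x d : Euc n) :
    FderivL A hm x d =
      ((m : ℝ) - 1) • wvec A hm x d - tpow A x • d - ((m : ℝ) * ⟪tvec A hm x, d⟫) • x :=
  rfl

lemma FderivL_apply_self (x : Euc n) :
    FderivL A hm x x = ((m : ℝ) - 1) • Fvec A hm x - (2 * tpow A x) • x := by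
  rw [FderivL_apply, wvec_self, inner_tvec_self, Fvec]
  module

lemma inner_Fvec_self (x : Euc n) : ⟪Fvec A hm x, x⟫ = tpow A x * (1 - ‖x‖ ^ 2) := by
  rw [Fvec, inner_sub_left, inner_smul_left, inner_tvec_self, real_inner_self_eq_norm_sq]
  simp only [conj_trivial]
  ring

lemma inner_Fvec_FderivL_self {x : Euc n} (hx : ‖x‖ = 1) :
    ⟪Fvec A hm x, FderivL A hm x x⟫ = ((m : ℝ) - 1) * ‖Fvec A hm x‖ ^ 2 := by
  have hperp : ⟪Fvec A hm x, x⟫ = 0 := by simp [inner_Fvec_self, hx]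
  rw [FderivL_apply_self, inner_sub_right, inner_smul_right, inner_smul_right, hperp,
    real_inner_self_eq_norm_sq]
  ring

lemma Fvec_eq_zero_of_adjoint_FderivL_eq_zero {x : Euc n} (hx : ‖x‖ = 1)
    (h : ContinuousLinearMap.adjoint (FderivL A hm x) (Fvec A hm x) = 0) :
    Fvec A hm x = 0 := by
  have hzero : ((m : ℝ) - 1) * ‖Fvec A hm x‖ ^ 2 = 0 := by
    rw [← inner_Fvec_FderivL_self A hm hx, ← ContinuousLinearMap.adjoint_inner_left, h,
      inner_zero_left]
  have hm1 : (m : ℝ) - 1 ≠ 0 := by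
    have : (2 : ℝ) ≤ m := by exact_mod_cast hm
    linarith
  simpa [hm1] using hzero

end

theorem stmt16_general {m n : ℕ} (hm : 2 ≤ m) (A : Tensor m n)
    (x : Euc n) (hx : ‖x‖ = 1) :
    (ContinuousLinearMap.adjoint (FderivL A hm x) (Fvec A hm x) = 0 ↔ Fvec A hm x = 0) ∧
    (Fvec A hm x = 0 ↔ tvec A hm x = tpow A x • x) :=
  ⟨⟨Fvec_eq_zero_of_adjoint_FderivL_eq_zero A hm hx, fun h => by rw [h, map_zero]⟩, sub_eq_zero⟩

/-- a unit vector `x` is a stationary point of `θ` iff `F(x) = 0`, i.e. iff `x`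
is a `Z`-eigenvector of `A` with eigenvalue `A x^m`. -/
theorem stmt16 {m n : ℕ} (hn : 1 ≤ n) (hm : 2 ≤ m) (A : Tensor m n) (hA : IsSymmTensor A)
    (x : Euc n) (hx : ‖x‖ = 1) :
    (ContinuousLinearMap.adjoint (FderivL A hm x) (Fvec A hm x) = 0 ↔ Fvec A hm x = 0) ∧
    (Fvec A hm x = 0 ↔ tvec A hm x = tpow A x • x) :=
  stmt16_general hm A x hx
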